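/- Let μ be a Borel probability measure on ℝ^p with M_d(μ) positive definite and let x̄ ∈ ℝ^p. Then there exists a polynomial P of degree at most d with P(x̄) = 1 such that μ({x ∈ ℝ^p : P(x)^2 ≤ 1}) ≥ 1 − Q_{μ,d}(x̄)^{-1}. -/

import Mathlib

/-!
For `v = v_d(x̄)` and `Q = v ⬝ M⁻¹ v`, the coefficient vector `c = Q⁻¹ M⁻¹ v` satisfies
`P(x̄) = c ⬝ v = 1` and, since `M` is the Gram matrix of the monomials in `L²(μ)`,
`∫ P² dμ = c ⬝ M c = Q⁻¹`. Markov's inequality for `P²` then gives `μ {P² ≥ 1} ≤ Q⁻¹`.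
-/

open MeasureTheory Finset Matrix

/-- Multi-indices in `p` variables of total degree at most `d`. -/
abbrev MIdx (p d : ℕ) := {α : Fin p → Fin (d + 1) // ∑ i, (α i : ℕ) ≤ d}

/-- The monomial `x ^ α`. -/
noncomputable def mon {p d : ℕ} (α : MIdx p d) (x : Fin p → ℝ) : ℝ :=
  ∏ i, x i ^ (α.1 i : ℕ)

/-- The moment matrix `M_d(μ)`, with entries `∫ x^(α+β) dμ`. -/
noncomputable def momMat {p : ℕ} (d : ℕ) (μ : Measure (Fin p → ℝ)) :
    Matrix (MIdx p d) (MIdx p d) ℝ :=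
  fun α β => ∫ x, mon α x * mon β x ∂μ

/-- Evaluation of the polynomial with coefficient vector `c` at `x`. -/
noncomputable def peval {p d : ℕ} (c : MIdx p d → ℝ) (x : Fin p → ℝ) : ℝ :=
  ∑ α, c α * mon α x

/-- The vector of monomials `v_d(x)`. -/
noncomputable def vvec {p : ℕ} (d : ℕ) (x : Fin p → ℝ) : MIdx p d → ℝ :=
  fun α => mon α x

/-- Graded lexicographic (strict) order: `glex α β` means `α <_gl β`. -/
def glex {p d : ℕ} (α β : MIdx p d) : Prop :=
  (∑ i, (α.1 i : ℕ)) < (∑ i, (β.1 i : ℕ)) ∨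
    ((∑ i, (α.1 i : ℕ)) = (∑ i, (β.1 i : ℕ)) ∧
      ∃ i, (∀ j, j < i → α.1 j = β.1 j) ∧ (β.1 i : ℕ) < (α.1 i : ℕ))

section Markov

variable {Ω : Type*} [MeasurableSpace Ω] {μ : Measure Ω} [IsProbabilityMeasure μ]

theorem ofReal_one_sub_integral_div_le_measure_le {f : Ω → ℝ} (hf_nonneg : 0 ≤ᵐ[μ] f)
    (hf_int : Integrable f μ) {ε : ℝ} (hε : 0 < ε) :
    ENNReal.ofReal (1 - (∫ x, f x ∂μ) / ε) ≤ μ {x | f x ≤ ε} := by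
  have h_nonneg : 0 ≤ (∫ x, f x ∂μ) / ε := div_nonneg (integral_nonneg_of_ae hf_nonneg) hε.le
  have h_tail : μ {x | ε ≤ f x} ≤ ENNReal.ofReal ((∫ x, f x ∂μ) / ε) := by
    rw [ENNReal.le_ofReal_iff_toReal_le (measure_ne_top μ _) h_nonneg, le_div_iff₀ hε,
      mul_comm]
    exact mul_meas_ge_le_integral_of_nonneg hf_nonneg hf_int ε
  have h_cover : (1 : ENNReal) ≤ μ {x | f x ≤ ε} + μ {x | ε ≤ f x} := by
    calc (1 : ENNReal) = μ ({x | f x ≤ ε} ∪ {x | ε ≤ f x}) := by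
          rw [← measure_univ (μ := μ)]
          congr 1
          ext x
          simpa using le_total (f x) ε
      _ ≤ _ := measure_union_le _ _
  calc ENNReal.ofReal (1 - (∫ x, f x ∂μ) / ε)
      = 1 - ENNReal.ofReal ((∫ x, f x ∂μ) / ε) := by
        rw [ENNReal.ofReal_sub _ h_nonneg, ENNReal.ofReal_one]
    _ ≤ 1 - μ {x | ε ≤ f x} := tsub_le_tsub_left h_tail 1
    _ ≤ μ {x | f x ≤ ε} := tsub_le_iff_right.mpr h_cover

end Markov

section Minimizer

variable {n : Type*} [Fintype n] [DecidableEq n]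

/-- The minimizer of `c ⬝ᵥ M *ᵥ c` under the constraint `c ⬝ᵥ v = 1`. -/
noncomputable def christoffelMinimizer (M : Matrix n n ℝ) (v : n → ℝ) : n → ℝ :=
  (v ⬝ᵥ M⁻¹ *ᵥ v)⁻¹ • M⁻¹ *ᵥ v

theorem christoffelMinimizer_dotProduct {M : Matrix n n ℝ} (hM : M.PosDef) {v : n → ℝ}
    (hv : v ≠ 0) : christoffelMinimizer M v ⬝ᵥ v = 1 := by
  have hQ : 0 < v ⬝ᵥ M⁻¹ *ᵥ v := hM.inv.dotProduct_mulVec_pos hv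
  rw [christoffelMinimizer, smul_dotProduct, dotProduct_comm (M⁻¹ *ᵥ v), smul_eq_mul,
    inv_mul_cancel₀ hQ.ne']

theorem christoffelMinimizer_quadForm {M : Matrix n n ℝ} (hM : IsUnit M.det) (v : n → ℝ) :
    christoffelMinimizer M v ⬝ᵥ M *ᵥ christoffelMinimizer M v = (v ⬝ᵥ M⁻¹ *ᵥ v)⁻¹ := by
  have hMw : M *ᵥ M⁻¹ *ᵥ v = v := by rw [mulVec_mulVec, mul_nonsing_inv M hM, one_mulVec]
  rw [christoffelMinimizer, mulVec_smul, hMw, smul_dotProduct, dotProduct_smul,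
    dotProduct_comm (M⁻¹ *ᵥ v), smul_eq_mul, smul_eq_mul, ← mul_assoc, ← mul_inv, inv_mul_eq_div,
    div_self_mul_self']

end Minimizer

section Gram

variable {Ω ι : Type*} [Fintype ι] {φ : ι → Ω → ℝ}

theorem sq_sum_mul_eq_sum_sum (c : ι → ℝ) (x : Ω) :
    (∑ i, c i * φ i x) ^ 2 = ∑ i, ∑ j, c i * c j * (φ i x * φ j x) := by
  rw [sq, Finset.sum_mul_sum]
  exact Finset.sum_congr rfl fun i _ => Finset.sum_congr rfl fun j _ => by ring

variable [MeasurableSpace Ω] {μ : Measure Ω}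

theorem integrable_sq_sum_mul (hφ : ∀ i j, Integrable (fun x => φ i x * φ j x) μ) (c : ι → ℝ) :
    Integrable (fun x => (∑ i, c i * φ i x) ^ 2) μ := by
  simp_rw [sq_sum_mul_eq_sum_sum]
  exact integrable_finsetSum _ fun i _ => integrable_finsetSum _ fun j _ => (hφ i j).const_mul _

theorem integral_sq_sum_mul (hφ : ∀ i j, Integrable (fun x => φ i x * φ j x) μ) (c : ι → ℝ) :
    ∫ x, (∑ i, c i * φ i x) ^ 2 ∂μ = c ⬝ᵥ (of fun i j => ∫ x, φ i x * φ j x ∂μ) *ᵥ c := by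
  simp_rw [sq_sum_mul_eq_sum_sum]
  rw [integral_finsetSum _ fun i _ => integrable_finsetSum _ fun j _ => (hφ i j).const_mul _]
  simp only [dotProduct, mulVec, Finset.mul_sum, of_apply]
  refine Finset.sum_congr rfl fun i _ => ?_
  rw [integral_finsetSum _ fun j _ => (hφ i j).const_mul _]
  refine Finset.sum_congr rfl fun j _ => ?_
  rw [integral_const_mul]
  ring

end Gram

theorem integrable_mon_mul_mon {p d : ℕ} {μ : Measure (Fin p → ℝ)}
    (hmom : ∀ α : Fin p → ℕ, Integrable (fun x => ∏ i, x i ^ α i) μ) (α β : MIdx p d) :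
    Integrable (fun x => mon α x * mon β x) μ := by
  simpa only [mon, ← Finset.prod_mul_distrib, ← pow_add] using
    hmom fun i => (α.1 i : ℕ) + (β.1 i : ℕ)

theorem vvec_ne_zero {p : ℕ} (d : ℕ) (x : Fin p → ℝ) : vvec d x ≠ 0 := by
  intro h
  have h0 := congrFun h ⟨0, by simp⟩
  simp [vvec, mon] at h0

/-- there is a polynomial `P` of degree ≤ d with `P(x̄) = 1` whose
sublevel set `{P² ≤ 1}` has μ-measure at least `1 - Q_{μ,d}(x̄)⁻¹`. -/
theorem christoffel_markov_sublevel {p d : ℕ} (μ : Measure (Fin p → ℝ))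
    [IsProbabilityMeasure μ]
    (hmom : ∀ α : Fin p → ℕ, Integrable (fun x => ∏ i, x i ^ α i) μ)
    (hpd : (momMat d μ).PosDef) (xbar : Fin p → ℝ) :
    ∃ c : MIdx p d → ℝ, peval c xbar = 1 ∧
      ENNReal.ofReal (1 - (vvec d xbar ⬝ᵥ (momMat d μ)⁻¹ *ᵥ vvec d xbar)⁻¹) ≤
        μ {x : Fin p → ℝ | (peval c x) ^ 2 ≤ 1} := by
  set c := christoffelMinimizer (momMat d μ) (vvec d xbar)
  refine ⟨c, christoffelMinimizer_dotProduct hpd (vvec_ne_zero d xbar), ?_⟩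
  have h_int : ∫ x, (peval c x) ^ 2 ∂μ = (vvec d xbar ⬝ᵥ (momMat d μ)⁻¹ *ᵥ vvec d xbar)⁻¹ := by
    rw [← christoffelMinimizer_quadForm hpd.det_pos.ne'.isUnit]
    exact integral_sq_sum_mul (integrable_mon_mul_mon hmom) c
  have h_markov := ofReal_one_sub_integral_div_le_measure_le
    (Filter.Eventually.of_forall fun x => sq_nonneg (peval c x))
    (integrable_sq_sum_mul (integrable_mon_mul_mon hmom) c) one_pos
  rwa [div_one, h_int] at h_markov
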